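/- Let 𝒢 be a connected undirected graph on n ≥ 2 vertices with incidence matrix H ∈ ℝ^{m×n}, H̄ = H ⊗ I_d, L = H̄ᵀH̄, and let C_1 = blkdiag(I_d, 0_d, …, 0_d) ∈ ℝ^{dn×dn}. Let p(t) be a continuous configuration in ℝ^d with well-defined edge bearings, and suppose the formation is BPE, i.e. there exist T > 0, μ > 0 with (1/T) ∫_t^{t+T} L_B(p(τ)) dτ ⪰ μ L for all t ≥ 0. Then the function t ↦ L_B(p(t)) + C_1 is persistently exciting: there exists μ' > 0 such that (1/T) ∫_t^{t+T} (L_B(p(τ)) + C_1) dτ ⪰ μ' I_{dn} for all t ≥ 0. -/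

import Mathlib

open Matrix MeasureTheory

noncomputable section

/-- `π_y = I - y yᵀ`: the orthogonal projection onto the hyperplane orthogonal to the
unit vector `y`. -/
def projMat {d : ℕ} (y : Fin d → ℝ) : Matrix (Fin d) (Fin d) ℝ :=
  1 - Matrix.vecMulVec y y

/-- A (symmetric positive-semidefinite valued) matrix function `Σ : [0,∞) → ℝ^{ι×ι}` is
*persistently exciting* (PE) if there are `T > 0`, `μ > 0` with
`(1/T) ∫_t^{t+T} Σ(τ) dτ ⪰ μ I` for all `t ≥ 0`; the Loewner bound is stated via
quadratic forms. -/
def MatrixPE {ι : Type*} [Fintype ι] (Sig : ℝ → Matrix ι ι ℝ) : Prop :=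
  ∃ T > (0 : ℝ), ∃ μ > (0 : ℝ), ∀ t ≥ (0 : ℝ), ∀ x : ι → ℝ,
    μ * (x ⬝ᵥ x) ≤ (1 / T) * ∫ τ in t..(t + T), x ⬝ᵥ (Sig τ).mulVec x

/-- A unit-vector valued function `y : [0,∞) → S^{d-1}` is PE if `t ↦ π_{y(t)}` is PE. -/
def BearingPE {d : ℕ} (y : ℝ → Fin d → ℝ) : Prop :=
  MatrixPE fun t => projMat (y t)

/-- Incidence matrix `H` of the oriented graph whose `k`-th edge goes from
`eInit k` to `eTerm k`. -/
def incMat {n m : ℕ} (eInit eTerm : Fin m → Fin n) : Matrix (Fin m) (Fin n) ℝ :=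
  Matrix.of fun k i => if i = eTerm k then 1 else if i = eInit k then -1 else 0

/-- `H̄ = H ⊗ I_d`. -/
def hbar (d : ℕ) {n m : ℕ} (eInit eTerm : Fin m → Fin n) :
    Matrix (Fin m × Fin d) (Fin n × Fin d) ℝ :=
  Matrix.of fun ka ib => incMat eInit eTerm ka.1 ib.1 * (if ka.2 = ib.2 then 1 else 0)

/-- `L = H̄ᵀ H̄`, the ordinary graph Laplacian tensored with `I_d`. -/
def lapMat (d : ℕ) {n m : ℕ} (eInit eTerm : Fin m → Fin n) :
    Matrix (Fin n × Fin d) (Fin n × Fin d) ℝ :=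
  (hbar d eInit eTerm)ᵀ * hbar d eInit eTerm

/-- Block diagonal matrix `blkdiag (f 1, …, f m)` with `d × d` blocks. -/
def blkdiag {m d : ℕ} (f : Fin m → Matrix (Fin d) (Fin d) ℝ) :
    Matrix (Fin m × Fin d) (Fin m × Fin d) ℝ :=
  Matrix.of fun ka lb => if ka.1 = lb.1 then f ka.1 ka.2 lb.2 else 0

/-- The `k`-th oriented edge vector `p̄_k = p_j - p_i`. -/
def edgeVec {d n m : ℕ} (eInit eTerm : Fin m → Fin n) (p : Fin n → Fin d → ℝ) (k : Fin m) :
    Fin d → ℝ :=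
  p (eTerm k) - p (eInit k)

/-- Euclidean norm on `ℝ^d` (as `Fin d → ℝ`). -/
def euclNorm {d : ℕ} (x : Fin d → ℝ) : ℝ := Real.sqrt (x ⬝ᵥ x)

/-- The bearing `ḡ_k = p̄_k / ‖p̄_k‖` of the `k`-th edge. -/
def bearingVec {d n m : ℕ} (eInit eTerm : Fin m → Fin n) (p : Fin n → Fin d → ℝ) (k : Fin m) :
    Fin d → ℝ :=
  (euclNorm (edgeVec eInit eTerm p k))⁻¹ • edgeVec eInit eTerm p k

/-- The bearing Laplacian `L_B(p) = H̄ᵀ blkdiag(π_{ḡ_1},…,π_{ḡ_m}) H̄`. -/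
def bearingLap {d n m : ℕ} (eInit eTerm : Fin m → Fin n) (p : Fin n → Fin d → ℝ) :
    Matrix (Fin n × Fin d) (Fin n × Fin d) ℝ :=
  (hbar d eInit eTerm)ᵀ * blkdiag (fun k => projMat (bearingVec eInit eTerm p k)) *
    hbar d eInit eTerm

/-- The simple undirected graph underlying the edge list. -/
def formationGraph {n m : ℕ} (eInit eTerm : Fin m → Fin n) : SimpleGraph (Fin n) :=
  SimpleGraph.fromRel fun i j => ∃ k, eInit k = i ∧ eTerm k = j

/-- `C₁ = blkdiag(I_d, 0, …, 0)`: the leader's position-measurement matrix. -/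
def leaderC1 (d : ℕ) {n : ℕ} (leader : Fin n) :
    Matrix (Fin n × Fin d) (Fin n × Fin d) ℝ :=
  Matrix.of fun ia jb => if ia.1 = leader ∧ jb.1 = leader ∧ ia.2 = jb.2 then 1 else 0

end


section Aux

variable {d n m : ℕ}

lemma hbar_mulVec (eInit eTerm : Fin m → Fin n) (hends : ∀ k, eInit k ≠ eTerm k)
    (x : Fin n × Fin d → ℝ) (k : Fin m) (a : Fin d) :
    (hbar d eInit eTerm).mulVec x (k, a) = x (eTerm k, a) - x (eInit k, a) := by
  classical
  have key : ∀ ib : Fin n × Fin d,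
      hbar d eInit eTerm (k, a) ib * x ib
        = (if ib = (eTerm k, a) then x (eTerm k, a) else 0)
          + (if ib = (eInit k, a) then -x (eInit k, a) else 0) := by
    rintro ⟨i, b⟩
    simp only [hbar, incMat, Matrix.of_apply, Prod.mk.injEq]
    by_cases h1 : i = eTerm k <;> by_cases h2 : i = eInit k <;> by_cases h3 : a = b <;>
      simp_all [eq_comm]
  show (∑ ib : Fin n × Fin d, hbar d eInit eTerm (k, a) ib * x ib) = _
  rw [Finset.sum_congr rfl fun ib _ => key ib, Finset.sum_add_distrib]
  simp only [Finset.sum_ite_eq', Finset.mem_univ, if_true]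
  ring

lemma lap_quad (eInit eTerm : Fin m → Fin n) (x : Fin n × Fin d → ℝ) :
    x ⬝ᵥ (lapMat d eInit eTerm).mulVec x
      = (hbar d eInit eTerm).mulVec x ⬝ᵥ (hbar d eInit eTerm).mulVec x := by
  rw [lapMat, ← Matrix.mulVec_mulVec, Matrix.dotProduct_mulVec, Matrix.vecMul_transpose]

lemma dot_self_nonneg {ι : Type*} [Fintype ι] (v : ι → ℝ) : 0 ≤ v ⬝ᵥ v :=
  Finset.sum_nonneg fun i _ => mul_self_nonneg (v i)

lemma c1_mulVec (l : Fin n) (x : Fin n × Fin d → ℝ) (ia : Fin n × Fin d) :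
    (leaderC1 d l).mulVec x ia = if ia.1 = l then x (l, ia.2) else 0 := by
  classical
  obtain ⟨i, b⟩ := ia
  show (∑ jc : Fin n × Fin d, leaderC1 d l (i, b) jc * x jc) = _
  have key : ∀ jc : Fin n × Fin d,
      leaderC1 d l (i, b) jc * x jc
        = if i = l then (if jc = (l, b) then x (l, b) else 0) else 0 := by
    rintro ⟨j, c⟩
    simp only [leaderC1, Matrix.of_apply, Prod.mk.injEq]
    by_cases h0 : i = l <;> by_cases h1 : j = l <;> by_cases h2 : b = c <;>
      simp_all [eq_comm]
  rw [Finset.sum_congr rfl fun jc _ => key jc]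
  by_cases h0 : i = l <;> simp [h0, Finset.sum_ite_eq']

lemma c1_quad (l : Fin n) (x : Fin n × Fin d → ℝ) :
    x ⬝ᵥ (leaderC1 d l).mulVec x = ∑ b : Fin d, x (l, b) * x (l, b) := by
  classical
  show (∑ ia : Fin n × Fin d, x ia * (leaderC1 d l).mulVec x ia) = _
  rw [Finset.sum_congr rfl fun ia _ => by rw [c1_mulVec]]
  rw [Fintype.sum_prod_type]
  simp [Finset.sum_ite_eq', mul_ite]

lemma quad_smul {ι : Type*} [Fintype ι] (M : Matrix ι ι ℝ) (c : ℝ) (x : ι → ℝ) :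
    (c • x) ⬝ᵥ M.mulVec (c • x) = c ^ 2 * (x ⬝ᵥ M.mulVec x) := by
  rw [Matrix.mulVec_smul, dotProduct_smul, smul_dotProduct]
  simp [smul_eq_mul]; ring

lemma cont_quad {ι : Type*} [Fintype ι] (M : Matrix ι ι ℝ) :
    Continuous fun x : ι → ℝ => x ⬝ᵥ M.mulVec x := by
  apply continuous_finset_sum
  intro i _
  exact (continuous_apply i).mul
    (continuous_finset_sum _ fun j _ => continuous_const.mul (continuous_apply j))

/-- Key positivity lemma: `μ L + C₁` is positive definite when the graph is connected. -/
lemma key_pos (hd : 2 ≤ d) (hn : 2 ≤ n)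
    (eInit eTerm : Fin m → Fin n) (hends : ∀ k, eInit k ≠ eTerm k)
    (hconn : (formationGraph eInit eTerm).Connected)
    (μ : ℝ) (hμ : 0 < μ) (l : Fin n) :
    ∃ μ' > (0 : ℝ), ∀ x : Fin n × Fin d → ℝ,
      μ' * (x ⬝ᵥ x) ≤ μ * (x ⬝ᵥ (lapMat d eInit eTerm).mulVec x)
        + x ⬝ᵥ (leaderC1 d l).mulVec x := by
  classical
  set F : (Fin n × Fin d → ℝ) → ℝ :=
    fun x => μ * (x ⬝ᵥ (lapMat d eInit eTerm).mulVec x) + x ⬝ᵥ (leaderC1 d l).mulVec x with hF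
  have hFcont : Continuous F :=
    (continuous_const.mul (cont_quad _)).add (cont_quad _)
  haveI : Inhabited (Fin n × Fin d) := ⟨(l, ⟨0, by omega⟩)⟩
  haveI : Nontrivial (Fin n × Fin d → ℝ) := Pi.nontrivial
  have hsph : (Metric.sphere (0 : Fin n × Fin d → ℝ) 1).Nonempty :=
    NormedSpace.sphere_nonempty.mpr zero_le_one
  obtain ⟨x₀, hx₀mem, hmin⟩ :=
    (isCompact_sphere (0 : Fin n × Fin d → ℝ) 1).exists_isMinOn hsph hFcont.continuousOn
  have hx₀norm : ‖x₀‖ = 1 := mem_sphere_zero_iff_norm.mp hx₀mem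
  -- F is nonneg with nonneg parts
  have hL0 : ∀ x : Fin n × Fin d → ℝ, 0 ≤ x ⬝ᵥ (lapMat d eInit eTerm).mulVec x := by
    intro x; rw [lap_quad]; exact dot_self_nonneg _
  have hC0 : ∀ x : Fin n × Fin d → ℝ, 0 ≤ x ⬝ᵥ (leaderC1 d l).mulVec x := by
    intro x; rw [c1_quad]; exact Finset.sum_nonneg fun b _ => mul_self_nonneg _
  -- F x₀ > 0
  have hFx₀ : 0 < F x₀ := by
    rcases lt_or_ge 0 (F x₀) with h | h
    · exact h
    exfalso
    have h' : μ * (x₀ ⬝ᵥ (lapMat d eInit eTerm).mulVec x₀)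
        + x₀ ⬝ᵥ (leaderC1 d l).mulVec x₀ ≤ 0 := h
    have hmul : 0 ≤ μ * (x₀ ⬝ᵥ (lapMat d eInit eTerm).mulVec x₀) :=
      mul_nonneg hμ.le (hL0 x₀)
    have hC : x₀ ⬝ᵥ (leaderC1 d l).mulVec x₀ = 0 := by linarith [hC0 x₀]
    have hμL : μ * (x₀ ⬝ᵥ (lapMat d eInit eTerm).mulVec x₀) = 0 := by linarith [hC0 x₀]
    have hL : x₀ ⬝ᵥ (lapMat d eInit eTerm).mulVec x₀ = 0 :=
      (mul_eq_zero.mp hμL).resolve_left (ne_of_gt hμ)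
    have hHx : (hbar d eInit eTerm).mulVec x₀ = 0 := by
      rw [lap_quad] at hL
      exact dotProduct_self_eq_zero.mp hL
    have hedge : ∀ k a, x₀ (eTerm k, a) = x₀ (eInit k, a) := by
      intro k a
      have := congrFun hHx (k, a)
      rw [hbar_mulVec eInit eTerm hends] at this
      have : x₀ (eTerm k, a) - x₀ (eInit k, a) = 0 := this
      linarith
    have hlead : ∀ b, x₀ (l, b) = 0 := by
      rw [c1_quad] at hC
      intro b
      have := (Finset.sum_eq_zero_iff_of_nonneg
        (fun b _ => mul_self_nonneg (x₀ (l, b)))).mp hC b (Finset.mem_univ b)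
      exact mul_self_eq_zero.mp this
    set q : Fin n → Fin d → ℝ := fun i a => x₀ (i, a) with hq
    have hadj : ∀ i j, (formationGraph eInit eTerm).Adj i j → q i = q j := by
      intro i j hij
      rw [formationGraph, SimpleGraph.fromRel_adj] at hij
      obtain ⟨-, hij | hij⟩ := hij <;> obtain ⟨k, hk1, hk2⟩ := hij <;> funext a
      · rw [← hk1, ← hk2]; exact (hedge k a).symm
      · rw [← hk1, ← hk2]; exact hedge k a
    have hwalk : ∀ {i j}, (formationGraph eInit eTerm).Walk i j → q i = q j := by
      intro i j w
      induction w with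
      | nil => rfl
      | cons h _ ih => exact (hadj _ _ h).trans ih
    have hall : ∀ i, q i = q l := fun i => hwalk (hconn i l).some
    have : x₀ = 0 := by
      funext ib
      obtain ⟨i, b⟩ := ib
      have : q i b = q l b := by rw [hall i]
      simpa [hq, hlead b] using this
    rw [this] at hx₀norm
    simp at hx₀norm
  -- conclude
  set N : ℝ := (Fintype.card (Fin n × Fin d) : ℝ) with hN
  haveI : Nonempty (Fin n × Fin d) := ⟨(l, ⟨0, by omega⟩)⟩
  have hNpos : 0 < N := by
    rw [hN]
    exact_mod_cast (Fintype.card_pos : 0 < Fintype.card (Fin n × Fin d))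
  refine ⟨F x₀ / N, div_pos hFx₀ hNpos, ?_⟩
  intro x
  by_cases hx : x = 0
  · subst hx
    simp [hF, Matrix.mulVec_zero]
  have hc : 0 < ‖x‖ := norm_pos_iff.mpr hx
  set c : ℝ := ‖x‖ with hcdef
  set u : Fin n × Fin d → ℝ := c⁻¹ • x with hu
  have hunorm : ‖u‖ = 1 := by
    rw [hu, norm_smul, norm_inv, norm_norm, ← hcdef, inv_mul_cancel₀ (ne_of_gt hc)]
  have humem : u ∈ Metric.sphere (0 : Fin n × Fin d → ℝ) 1 :=
    mem_sphere_zero_iff_norm.mpr hunorm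
  have hxu : x = c • u := by
    rw [hu, smul_smul, mul_inv_cancel₀ (ne_of_gt hc), one_smul]
  have hFu : F x₀ ≤ F u := hmin humem
  have hFx : F x = c ^ 2 * F u := by
    rw [hxu, hF]
    simp only [quad_smul]
    ring
  have hdot : x ⬝ᵥ x ≤ N * c ^ 2 := by
    have h1 : ∀ i : Fin n × Fin d, x i * x i ≤ c ^ 2 := by
      intro i
      have := norm_le_pi_norm x i
      rw [Real.norm_eq_abs] at this
      nlinarith [abs_nonneg (x i), le_abs_self (x i), neg_abs_le (x i)]
    calc x ⬝ᵥ x = ∑ i : Fin n × Fin d, x i * x i := rfl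
      _ ≤ ∑ _i : Fin n × Fin d, c ^ 2 := Finset.sum_le_sum fun i _ => h1 i
      _ = N * c ^ 2 := by rw [Finset.sum_const, hN]; simp [nsmul_eq_mul]
  have hgoal : F x₀ / N * (x ⬝ᵥ x) ≤ F x := by
    have h2 : F x₀ / N * (x ⬝ᵥ x) ≤ F x₀ / N * (N * c ^ 2) := by
      apply mul_le_mul_of_nonneg_left hdot (le_of_lt (div_pos hFx₀ hNpos))
    have h3 : F x₀ / N * (N * c ^ 2) = F x₀ * c ^ 2 := by
      field_simp
    have h4 : F x₀ * c ^ 2 ≤ F u * c ^ 2 :=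
      mul_le_mul_of_nonneg_right hFu (sq_nonneg c)
    have h5 : F u * c ^ 2 = c ^ 2 * F u := mul_comm _ _
    rw [hFx]
    exact ((h2.trans h3.le).trans h4).trans h5.le
  exact hgoal

/-- Continuity of the bearing-Laplacian quadratic form in time. -/
lemma cont_integrand (eInit eTerm : Fin m → Fin n)
    (p : ℝ → Fin n → Fin d → ℝ) (hcont : ContinuousOn p (Set.Ici 0))
    (hwell : ∀ t ≥ (0 : ℝ), ∀ k, p t (eInit k) ≠ p t (eTerm k))
    (x : Fin n × Fin d → ℝ) :
    ContinuousOn (fun τ => x ⬝ᵥ (bearingLap eInit eTerm (p τ)).mulVec x) (Set.Ici 0) := by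
  classical
  have hpc : ∀ (i : Fin n) (a : Fin d), ContinuousOn (fun τ => p τ i a) (Set.Ici 0) := by
    intro i a
    exact ((continuous_apply a).comp (continuous_apply i)).comp_continuousOn hcont
  have he : ∀ (k : Fin m) (a : Fin d),
      ContinuousOn (fun τ => edgeVec eInit eTerm (p τ) k a) (Set.Ici 0) := by
    intro k a
    simp only [edgeVec, Pi.sub_apply]
    exact (hpc (eTerm k) a).sub (hpc (eInit k) a)
  have hd2 : ∀ k : Fin m,
      ContinuousOn (fun τ => edgeVec eInit eTerm (p τ) k ⬝ᵥ edgeVec eInit eTerm (p τ) k)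
        (Set.Ici 0) := by
    intro k
    apply continuousOn_finset_sum
    intro a _
    exact (he k a).mul (he k a)
  have hpos : ∀ τ ∈ Set.Ici (0 : ℝ), ∀ k : Fin m,
      0 < edgeVec eInit eTerm (p τ) k ⬝ᵥ edgeVec eInit eTerm (p τ) k := by
    intro τ hτ k
    have hne : edgeVec eInit eTerm (p τ) k ≠ 0 := by
      intro h0
      have : p τ (eTerm k) = p τ (eInit k) := by
        funext a
        have := congrFun h0 a
        simp only [edgeVec, Pi.sub_apply, Pi.zero_apply] at this
        linarith
      exact hwell τ hτ k this.symm
    have h1 : edgeVec eInit eTerm (p τ) k ⬝ᵥ edgeVec eInit eTerm (p τ) k ≠ 0 :=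
      fun h => hne (dotProduct_self_eq_zero.mp h)
    exact lt_of_le_of_ne (dot_self_nonneg _) (Ne.symm h1)
  have hinv : ∀ k : Fin m,
      ContinuousOn (fun τ => (euclNorm (edgeVec eInit eTerm (p τ) k))⁻¹) (Set.Ici 0) := by
    intro k
    apply ContinuousOn.inv₀
    · exact Real.continuous_sqrt.comp_continuousOn (hd2 k)
    · intro τ hτ
      exact ne_of_gt (Real.sqrt_pos.mpr (hpos τ hτ k))
  have hbear : ∀ (k : Fin m) (a : Fin d),
      ContinuousOn (fun τ => bearingVec eInit eTerm (p τ) k a) (Set.Ici 0) := by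
    intro k a
    simp only [bearingVec, Pi.smul_apply, smul_eq_mul]
    exact (hinv k).mul (he k a)
  have hproj : ∀ (k : Fin m) (a b : Fin d),
      ContinuousOn (fun τ => projMat (bearingVec eInit eTerm (p τ) k) a b) (Set.Ici 0) := by
    intro k a b
    simp only [projMat, Matrix.sub_apply, Matrix.vecMulVec_apply]
    exact continuousOn_const.sub ((hbear k a).mul (hbear k b))
  have hblk : ∀ ka lb : Fin m × Fin d,
      ContinuousOn
        (fun τ => blkdiag (fun k => projMat (bearingVec eInit eTerm (p τ) k)) ka lb)
        (Set.Ici 0) := by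
    intro ka lb
    simp only [blkdiag, Matrix.of_apply]
    by_cases h : ka.1 = lb.1
    · simpa [h] using hproj lb.1 ka.2 lb.2
    · simp [h]
      exact continuousOn_const
  have hBL : ∀ ia jb : Fin n × Fin d,
      ContinuousOn (fun τ => bearingLap eInit eTerm (p τ) ia jb) (Set.Ici 0) := by
    intro ia jb
    simp only [bearingLap, Matrix.mul_apply]
    apply continuousOn_finset_sum
    intro lb _
    apply ContinuousOn.mul _ continuousOn_const
    apply continuousOn_finset_sum
    intro ka _
    exact ContinuousOn.mul continuousOn_const (hblk ka lb)
  apply continuousOn_finset_sum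
  intro ia _
  apply ContinuousOn.mul continuousOn_const
  apply continuousOn_finset_sum
  intro jb _
  exact (hBL ia jb).mul continuousOn_const

end Aux

/-- If the formation is BPE with constants `T, μ`, then with one
leader (agent 1 measuring its position) the function `t ↦ L_B(p(t)) + C₁` is
persistently exciting: `(1/T)∫_t^{t+T} (L_B(p(τ)) + C₁) dτ ⪰ μ' I` for some
`μ' > 0` and all `t ≥ 0`. -/
theorem stmt17 {d n m : ℕ} (hd : 2 ≤ d) (hn : 2 ≤ n)
    (eInit eTerm : Fin m → Fin n) (hends : ∀ k, eInit k ≠ eTerm k)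
    (hconn : (formationGraph eInit eTerm).Connected)
    (p : ℝ → Fin n → Fin d → ℝ)
    (hcont : ContinuousOn p (Set.Ici 0))
    (hwell : ∀ t ≥ (0 : ℝ), ∀ k, p t (eInit k) ≠ p t (eTerm k))
    (T μ : ℝ) (hT : 0 < T) (hμ : 0 < μ)
    (hbpe : ∀ t ≥ (0 : ℝ), ∀ x : Fin n × Fin d → ℝ,
      μ * (x ⬝ᵥ (lapMat d eInit eTerm).mulVec x) ≤
        (1 / T) * ∫ τ in t..(t + T), x ⬝ᵥ (bearingLap eInit eTerm (p τ)).mulVec x) :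
    ∃ μ' > (0 : ℝ), ∀ t ≥ (0 : ℝ), ∀ x : Fin n × Fin d → ℝ,
      μ' * (x ⬝ᵥ x) ≤
        (1 / T) * ∫ τ in t..(t + T),
          x ⬝ᵥ ((bearingLap eInit eTerm (p τ) +
            leaderC1 d (⟨0, by omega⟩ : Fin n)).mulVec x) := by
  classical
  set l : Fin n := (⟨0, by omega⟩ : Fin n) with hl
  obtain ⟨μ', hμ'pos, hkey⟩ := key_pos hd hn eInit eTerm hends hconn μ hμ l
  refine ⟨μ', hμ'pos, ?_⟩
  intro t ht x
  have hsub : Set.uIcc t (t + T) ⊆ Set.Ici (0 : ℝ) := by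
    rw [Set.uIcc_of_le (by linarith)]
    intro τ hτ
    exact le_trans ht hτ.1
  have hint : IntervalIntegrable
      (fun τ => x ⬝ᵥ (bearingLap eInit eTerm (p τ)).mulVec x) volume t (t + T) :=
    ((cont_integrand eInit eTerm p hcont hwell x).mono hsub).intervalIntegrable
  have hsplit : ∀ τ : ℝ,
      x ⬝ᵥ ((bearingLap eInit eTerm (p τ) + leaderC1 d l).mulVec x)
        = x ⬝ᵥ (bearingLap eInit eTerm (p τ)).mulVec x
          + x ⬝ᵥ (leaderC1 d l).mulVec x := by
    intro τ
    rw [Matrix.add_mulVec, dotProduct_add]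
  have hIeq : (∫ τ in t..(t + T),
        x ⬝ᵥ ((bearingLap eInit eTerm (p τ) + leaderC1 d l).mulVec x))
      = (∫ τ in t..(t + T), x ⬝ᵥ (bearingLap eInit eTerm (p τ)).mulVec x)
        + T * (x ⬝ᵥ (leaderC1 d l).mulVec x) := by
    rw [intervalIntegral.integral_congr (g := fun τ =>
        x ⬝ᵥ (bearingLap eInit eTerm (p τ)).mulVec x + x ⬝ᵥ (leaderC1 d l).mulVec x)
        (fun τ _ => hsplit τ)]
    rw [intervalIntegral.integral_add hint intervalIntegrable_const,
      intervalIntegral.integral_const]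
    simp only [smul_eq_mul]
    ring
  rw [hIeq]
  have hbpe' := hbpe t ht x
  have hkey' := hkey x
  have hT' : (0 : ℝ) < 1 / T := by positivity
  calc μ' * (x ⬝ᵥ x)
      ≤ μ * (x ⬝ᵥ (lapMat d eInit eTerm).mulVec x) + x ⬝ᵥ (leaderC1 d l).mulVec x := hkey'
    _ ≤ (1 / T) * (∫ τ in t..(t + T), x ⬝ᵥ (bearingLap eInit eTerm (p τ)).mulVec x)
          + x ⬝ᵥ (leaderC1 d l).mulVec x := by linarith
    _ = (1 / T) * ((∫ τ in t..(t + T), x ⬝ᵥ (bearingLap eInit eTerm (p τ)).mulVec x)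
          + T * (x ⬝ᵥ (leaderC1 d l).mulVec x)) := by
        field_simp
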